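/- arXiv:0810.3163 — 5 statements merged into one kernel-verified Lean document; each statement's English description precedes it below -/
import Mathlib

section
/- Let i, j, k be integers with i > j > 0 and k > 2i + j, and let N be a positive integer. Define F(N) as the number of integer points (x,y) with 2Nj ≤ x ≤ 2Ni, y = 1 + 2N(i+j), and x + y ≡ N+1 (mod 2), minus the number of integer points (x,y) with 2Nj ≤ x ≤ 2Ni - N - 1, y = 2Ni, and x + y ≡ N+1 (mod 2). Then F(N) = N/2 + 1 if N is even and F(N) = (N-1)/2 if N is odd. In particular F(1) = 0 and F(N) > 0 for all N > 1. -/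
/-!
Both counts are parity counts over integer intervals starting at the even number `2Nj`: the first
interval `[2Nj, 2Ni]` contains `N(i - j) + [N even]` points of the parity of `N`, the second,
`N + 1` points shorter, contains `N(i - j) - ⌊N/2⌋` points of the parity of `N + 1`.
The `N(i - j)` terms cancel.
-/

open Finset

theorem Int.Icc_filter_modEq_card {r : ℤ} (hr : 0 < r) (a b v : ℤ) (hab : a ≤ b + 1) :
    (#{x ∈ Icc a b | x ≡ v [ZMOD r]} : ℤ) = (b - v) / r - (a - 1 - v) / r := by
  rw [← Ioc_sub_one_left_eq_Icc, Int.Ioc_filter_modEq_card _ _ hr]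
  lift r to ℕ using hr.le
  have h := Rat.floor_intCast_div_natCast (b - v) r
  have h' := Rat.floor_intCast_div_natCast (a - 1 - v) r
  push_cast at h h' ⊢
  rw [h, h', max_eq_left]
  exact sub_nonneg.2 (Int.ediv_le_ediv hr (by omega))

section LatticeCounts

variable {i j N : ℤ}

lemma card_upper_points (hji : j ≤ i) (hN : 0 ≤ N) :
    (#{x ∈ Icc (2*N*j) (2*N*i) | (x + (1 + 2*N*(i+j))) % 2 = (N + 1) % 2} : ℤ)
      = N * (i - j) + if Even N then 1 else 0 := by
  have hmono : N * j ≤ N * i := mul_le_mul_of_nonneg_left hji hN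
  have hparity : ∀ x : ℤ, (x + (1 + 2*N*(i+j))) % 2 = (N + 1) % 2 ↔ x ≡ N [ZMOD 2] := by
    intro x
    rw [Int.ModEq, show 2*N*(i+j) = 2*(N*i) + 2*(N*j) by ring]
    omega
  rw [filter_congr fun x _ => hparity x,
    Int.Icc_filter_modEq_card two_pos _ _ _ (by linarith),
    show 2*N*i = 2*(N*i) by ring, show 2*N*j = 2*(N*j) by ring, mul_sub]
  split_ifs with hN2 <;> rw [Int.even_iff] at hN2 <;> omega

lemma card_lower_points (hji : j < i) (hN : 0 ≤ N) :
    (#{x ∈ Icc (2*N*j) (2*N*i - N - 1) | (x + 2*N*i) % 2 = (N + 1) % 2} : ℤ)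
      = N * (i - j) - N / 2 := by
  have hmono : N * j + N ≤ N * i := by nlinarith
  have hparity : ∀ x : ℤ, (x + 2*N*i) % 2 = (N + 1) % 2 ↔ x ≡ N + 1 [ZMOD 2] := by
    intro x
    rw [Int.ModEq, show 2*N*i = 2*(N*i) by ring]
    omega
  rw [filter_congr fun x _ => hparity x,
    Int.Icc_filter_modEq_card two_pos _ _ _ (by linarith),
    show 2*N*i = 2*(N*i) by ring, show 2*N*j = 2*(N*j) by ring, mul_sub]
  omega

end LatticeCounts

theorem stmt1_general (i j : ℤ) (hij : j < i)
    (F : ℤ → ℤ)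
    (hF : ∀ N : ℤ, F N =
      (((Finset.Icc (2*N*j) (2*N*i)).filter
          (fun x => (x + (1 + 2*N*(i+j))) % 2 = (N + 1) % 2)).card : ℤ)
      - (((Finset.Icc (2*N*j) (2*N*i - N - 1)).filter
          (fun x => (x + 2*N*i) % 2 = (N + 1) % 2)).card : ℤ)) :
    (∀ N : ℤ, 0 < N → F N = if Even N then N/2 + 1 else (N - 1)/2)
      ∧ F 1 = 0 ∧ (∀ N : ℤ, 1 < N → 0 < F N) := by
  have hformula : ∀ N : ℤ, 0 < N → F N = if Even N then N/2 + 1 else (N - 1)/2 := by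
    intro N hN
    rw [hF N, card_upper_points hij.le hN.le, card_lower_points hij hN.le]
    split_ifs with hN2 <;> rw [Int.even_iff] at hN2 <;> omega
  refine ⟨hformula, by simpa using hformula 1 one_pos, fun N hN => ?_⟩
  rw [hformula N (by omega)]
  split_ifs with hN2 <;> rw [Int.even_iff] at hN2 <;> omega

/-- The lattice-point count F(N) (which by Rosas' formula equals the
Kronecker coefficient g_{N(k,k), N(k+1,k-1)}^{N(2k-2i-2j,2i,2j)}) satisfies
F(N) = N/2 + 1 for even N and F(N) = (N-1)/2 for odd N; in particular F(1) = 0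
and F(N) > 0 for all N > 1. -/
theorem stmt1 (i j k : ℤ) (hij : j < i) (hj : 0 < j) (hk : 2*i + j < k)
    (F : ℤ → ℤ)
    (hF : ∀ N : ℤ, F N =
      (((Finset.Icc (2*N*j) (2*N*i)).filter
          (fun x => (x + (1 + 2*N*(i+j))) % 2 = (N + 1) % 2)).card : ℤ)
      - (((Finset.Icc (2*N*j) (2*N*i - N - 1)).filter
          (fun x => (x + 2*N*i) % 2 = (N + 1) % 2)).card : ℤ)) :
    (∀ N : ℤ, 0 < N → F N = if Even N then N/2 + 1 else (N - 1)/2)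
      ∧ F 1 = 0 ∧ (∀ N : ℤ, 1 < N → 0 < F N) :=
  stmt1_general i j hij F hF
end

section
/- Define F : ℕ → ℤ by F(N) = N/2 + 1 for even N and F(N) = (N-1)/2 for odd N (so F(N) counts the value g_{Nα,Nβ}^{Nγ} in the main theorem). Then F is a quasipolynomial of period 2, F(1) = 0, and F(N) > 0 for all N ≥ 2; in particular F is not saturated: its constituent polynomial on the odd residue class, N ↦ (N-1)/2, does not vanish identically even though F(1) = 0. -/
/-- F(N) = N/2 + 1 for even N and (N-1)/2 for odd N is a
quasipolynomial of period 2 with F(1) = 0 and F(N) > 0 for all N ≥ 2; its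
constituent on the odd residue class does not vanish identically, so F is not
saturated. -/
theorem stmt8 (F : ℕ → ℤ)
    (hF : ∀ N : ℕ, F N = if Even N then (N : ℤ)/2 + 1 else ((N : ℤ) - 1)/2) :
    (∃ P Q : Polynomial ℚ,
        (∀ N : ℕ, Even N → (F N : ℚ) = P.eval (N : ℚ)) ∧
        (∀ N : ℕ, Odd N → (F N : ℚ) = Q.eval (N : ℚ)) ∧
        Q ≠ 0)
      ∧ F 1 = 0 ∧ (∀ N : ℕ, 2 ≤ N → 0 < F N) := by
  refine ⟨⟨Polynomial.C (1/2) * Polynomial.X + 1,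
          Polynomial.C (1/2) * Polynomial.X - Polynomial.C (1/2), ?_, ?_, ?_⟩, ?_, ?_⟩
  · rintro N ⟨k, rfl⟩
    rw [hF, if_pos ⟨k, rfl⟩]
    have h1 : ((k + k : ℕ) : ℤ) / 2 = k := by push_cast; omega
    rw [h1]
    push_cast
    simp only [Polynomial.eval_add, Polynomial.eval_mul, Polynomial.eval_C,
      Polynomial.eval_X, Polynomial.eval_one]
    ring
  · rintro N ⟨k, rfl⟩
    rw [hF]
    have hodd : ¬ Even (2 * k + 1) := by simp [Nat.even_add_one, parity_simps]
    rw [if_neg hodd]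
    have h1 : ((2 * k + 1 : ℕ) : ℤ) - 1 = 2 * k := by push_cast; ring
    rw [h1]
    have h2 : (2 * (k : ℤ)) / 2 = k := by omega
    rw [h2]
    push_cast
    simp only [Polynomial.eval_sub, Polynomial.eval_mul, Polynomial.eval_C,
      Polynomial.eval_X]
    ring
  · intro h
    have := congrArg (Polynomial.eval 3) h
    simp at this
    norm_num at this
  · rw [hF]; norm_num
  · intro N hN
    rw [hF]
    rcases Nat.even_or_odd N with he | ho
    · rw [if_pos he]
      have : (2:ℤ) ≤ (N:ℤ) := by exact_mod_cast hN
      omega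
    · rw [if_neg (Nat.not_even_iff_odd.mpr ho)]
      obtain ⟨k, rfl⟩ := ho
      have hk : 1 ≤ k := by omega
      have : ((2 * k + 1 : ℕ) : ℤ) = 2 * k + 1 := by push_cast; ring
      rw [this]
      have : (1:ℤ) ≤ k := by exact_mod_cast hk
      omega
end

section
/- The quasipolynomial G(N) = (7/4)N² + (3/2)N + 1 for even N and G(N) = (7/4)N² + (3/2)N − 1/4 for odd N takes positive integer values for every positive integer N, and is saturated, but is not positive (the constituent on odd N has a negative constant coefficient −1/4). -/
open Polynomial in
/-- G(N) = (7/4)N² + (3/2)N + 1 for even N and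
(7/4)N² + (3/2)N − 1/4 for odd N takes positive integer values for every
positive integer N, is saturated (vacuously, its value at 1 being nonzero),
but is not positive: its constituent on the odd class, the polynomial
(7/4)X² + (3/2)X − 1/4, has a negative constant coefficient. -/
theorem stmt9 (G : ℕ → ℚ)
    (hG : ∀ N : ℕ, G N = if Even N then 7/4*(N:ℚ)^2 + 3/2*N + 1
      else 7/4*(N:ℚ)^2 + 3/2*N - 1/4) :
    (∀ N : ℕ, 1 ≤ N → ∃ m : ℤ, 0 < m ∧ G N = (m : ℚ))
    ∧ (G 1 = 0 → ∀ N : ℕ, Odd N → G N = 0)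
    ∧ (C (7/4) * X^2 + C (3/2) * X + C (-1/4) : Polynomial ℚ).coeff 0 < 0 := by
  refine ⟨?_, ?_, ?_⟩
  · intro N hN
    rcases Nat.even_or_odd N with ⟨k, hk⟩ | ⟨k, hk⟩
    · refine ⟨7*k^2 + 3*k + 1, by positivity, ?_⟩
      rw [hG, if_pos ⟨k, hk⟩, hk]
      push_cast
      ring
    · refine ⟨7*k^2 + 10*k + 3, by positivity, ?_⟩
      rw [hG, if_neg (by simp [hk, Nat.even_add_one, Nat.not_even_iff_odd, parity_simps]), hk]
      push_cast
      ring
  · intro h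
    rw [hG 1] at h
    norm_num at h
  · simp
    norm_num
end

section
/- Let λ₂ ≥ λ₃ ≥ 0 and μ₂, ν₂ ≥ 0 be integers with μ₂ ≥ ν₂. The affine map (x,y) ↦ ((y − x + μ₂ + ν₂ − 1)/2, (−y − x + μ₂ + ν₂ + 1)/2) gives a bijection between the set of points (x,y) ∈ ℤ² with x + y ≡ μ₂ + ν₂ + 1 (mod 2) lying in R₊ ∩ Z, and the set of integer solutions (u,v) of the system u ≥ μ₂, v ≥ 0, μ₂ + ν₂ − λ₂ ≤ u + v ≤ μ₂ + ν₂ − λ₃, λ₂ ≤ u − v ≤ λ₂ + λ₃. -/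
/-- the affine map
(x,y) ↦ ((y − x + μ₂ + ν₂ − 1)/2, (−y − x + μ₂ + ν₂ + 1)/2) is a bijection from
the set of integer points of R₊ ∩ Z of the right parity onto the set of integer
solutions (u,v) of the system u ≥ μ₂, v ≥ 0, μ₂+ν₂−λ₂ ≤ u+v ≤ μ₂+ν₂−λ₃,
λ₂ ≤ u−v ≤ λ₂+λ₃. -/
theorem stmt10 (l2 l3 m2 n2 : ℤ) (h23 : l3 ≤ l2) (h3 : 0 ≤ l3)
    (hmn : n2 ≤ m2) (hn : 0 ≤ n2) :
    Set.BijOn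
      (fun p : ℤ × ℤ =>
        ((p.2 - p.1 + m2 + n2 - 1)/2, (-p.2 - p.1 + m2 + n2 + 1)/2))
      {p : ℤ × ℤ | (p.1 + p.2) % 2 = (m2 + n2 + 1) % 2 ∧
        l3 ≤ p.1 ∧ p.1 ≤ l2 ∧ 1 + l2 ≤ p.2 ∧ p.2 ≤ 1 + l2 + l3 ∧
        p.1 + p.2 ≤ m2 + n2 + 1 ∧ m2 - n2 + 1 ≤ p.2 - p.1}
      {q : ℤ × ℤ | m2 ≤ q.1 ∧ 0 ≤ q.2 ∧
        m2 + n2 - l2 ≤ q.1 + q.2 ∧ q.1 + q.2 ≤ m2 + n2 - l3 ∧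
        l2 ≤ q.1 - q.2 ∧ q.1 - q.2 ≤ l2 + l3} := by
  refine ⟨fun p hp => ?_, fun p hp q hq h => ?_, fun q hq => ?_⟩
  · simp only [Set.mem_setOf_eq] at hp ⊢
    omega
  · simp only [Set.mem_setOf_eq] at hp hq
    simp only [Prod.mk.injEq] at h
    refine Prod.ext ?_ ?_ <;> omega
  · simp only [Set.mem_setOf_eq] at hq
    refine ⟨(m2 + n2 - (q.1 + q.2), q.1 - q.2 + 1), ?_, ?_⟩
    · simp only [Set.mem_setOf_eq]; omega
    · refine Prod.ext ?_ ?_ <;> simp <;> omega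
end

section
/- For positive integers N, let λ = μ = ν = (N,N) and consider the regions of Rosas' formula for the partition triple ((N,N),(N,N),(N,N)); then Card(R₊ ∩ Z ∩ L) − Card(R₋ ∩ Z ∩ L) equals 1 if N is even and 0 if N is odd. -/
lemma card_filt (n : ℤ) (hn : 0 ≤ n) (r : ℤ) (hr : r = 0 ∨ r = 1) (hrn : r ≤ n) :
    (((Finset.Icc 0 n).filter (fun x => x % 2 = r)).card : ℤ) = (n - r) / 2 + 1 := by
  have himg : (Finset.Icc 0 n).filter (fun x => x % 2 = r)
      = (Finset.Icc 0 ((n - r) / 2)).image (fun k => 2 * k + r) := by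
    ext x
    simp only [Finset.mem_filter, Finset.mem_Icc, Finset.mem_image]
    constructor
    · rintro ⟨⟨h0, h1⟩, h2⟩
      exact ⟨x / 2, ⟨by omega, by omega⟩, by omega⟩
    · rintro ⟨k, ⟨hk0, hk1⟩, rfl⟩
      omega
  rw [himg, Finset.card_image_of_injective _ (fun a b hab => by omega),
    Int.card_Icc]
  omega

/-- with λ = μ = ν = (N,N), Rosas' formula gives
Card(R₊ ∩ Z ∩ L) − Card(R₋ ∩ Z ∩ L) = 1 for even N and 0 for odd N, where
R₊ = [0,N] × {1+N}, R₋ = [0,N] × {2+N}, Z = {(x,y) : x+y ≤ 2N+1, y−x ≥ 1},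
and L is the set of integer points with x+y odd.  This is the Kronecker
coefficient g_{(N,N),(N,N)}^{(N,N)}. -/
theorem stmt11 (N : ℤ) (hN : 0 < N) :
    ((((Finset.Icc 0 N).filter
        (fun x => (x + (1 + N)) % 2 = 1 ∧ x + (1 + N) ≤ 2*N + 1 ∧
          1 ≤ (1 + N) - x)).card : ℤ)
      - (((Finset.Icc 0 N).filter
        (fun x => (x + (2 + N)) % 2 = 1 ∧ x + (2 + N) ≤ 2*N + 1 ∧
          1 ≤ (2 + N) - x)).card : ℤ))
      = if Even N then 1 else 0 := by
  have h1 : (Finset.Icc 0 N).filter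
        (fun x => (x + (1 + N)) % 2 = 1 ∧ x + (1 + N) ≤ 2*N + 1 ∧
          1 ≤ (1 + N) - x)
      = (Finset.Icc 0 N).filter (fun x => x % 2 = N % 2) := by
    ext x
    simp only [Finset.mem_filter, Finset.mem_Icc]
    omega
  have h2 : (Finset.Icc 0 N).filter
        (fun x => (x + (2 + N)) % 2 = 1 ∧ x + (2 + N) ≤ 2*N + 1 ∧
          1 ≤ (2 + N) - x)
      = (Finset.Icc 0 (N - 1)).filter (fun x => x % 2 = (N + 1) % 2) := by
    ext x
    simp only [Finset.mem_filter, Finset.mem_Icc]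
    omega
  rw [h1, h2, card_filt N (by omega) (N % 2) (by omega) (by omega),
    card_filt (N - 1) (by omega) ((N + 1) % 2) (by omega) (by omega)]
  rcases Int.even_or_odd N with h | h
  · rw [if_pos h]
    rw [Int.even_iff] at h
    omega
  · rw [if_neg (by simpa using h)]
    rw [Int.odd_iff] at h
    omega
end
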